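/- arXiv:2403.18235 — 9 statements merged into one kernel-verified Lean document; each statement's English description precedes it below -/
import Mathlib

section
/- Let Q ∈ ℝ^{m×m} be symmetric positive definite, q ∈ ℝ^m, G ∈ ℝ^{n×m}, b ∈ ℝ^n, and ρ ∈ ℝ^n with ρ_i > 0 for all i. Set M = G Q⁻¹ Gᵀ and r = G Q⁻¹ q + b. Then y* ∈ ℝ^m is a global minimizer of the vector ℓ1-penalty objective φ_ρ(y) = ½yᵀQy + qᵀy + Σ_{i=1}^n ρ_i max(0, (Gy − b)_i) if and only if there exists a global minimizer ẑ* of the box-constrained QP min_{ẑ∈ℝ^n} ½ẑᵀMẑ + rᵀẑ subject to 0 ≤ ẑ ≤ ρ (componentwise) such that y* = −Q⁻¹(q + Gᵀẑ*). -/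
/-!
Weak duality for the Lagrangian `L(y, z) = ½yᵀQy + qᵀy + zᵀ(Gy − b)`: for `0 ≤ z ≤ ρ` one has
`ρᵢ max(0, s) ≥ zᵢ s`, so `φ_ρ(y) ≥ L(y, z) = ½‖y − y(z)‖²_Q − ψ(z) − ½qᵀQ⁻¹q`, where
`y(z) = −Q⁻¹(q + Gᵀz)` and `ψ(z) = ½zᵀMz + rᵀz`. At a minimizer `ẑ` of `ψ` on the box, the
first-order conditions say that `Gy(ẑ) − b = −∇ψ(ẑ)` is complementary to `ẑ`, so the bound is
attained at `y(ẑ)` and `φ_ρ(y) ≥ φ_ρ(y(ẑ)) + ½‖y − y(ẑ)‖²_Q`. Hence `y(ẑ)` is the unique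
minimizer of `φ_ρ`, and a box minimizer `ẑ` exists by compactness.
-/

open Matrix

variable {ι κ : Type*} [Fintype ι] [Fintype κ]

noncomputable section

def quadObj (A : Matrix ι ι ℝ) (c x : ι → ℝ) : ℝ := 1 / 2 * (x ⬝ᵥ A *ᵥ x) + c ⬝ᵥ x

def l1Penalty (Q : Matrix ι ι ℝ) (q : ι → ℝ) (G : Matrix κ ι ℝ) (b ρ : κ → ℝ) (y : ι → ℝ) : ℝ :=
  quadObj Q q y + ∑ i, ρ i * max 0 ((G *ᵥ y) i - b i)

def lagrangian (Q : Matrix ι ι ℝ) (q : ι → ℝ) (G : Matrix κ ι ℝ) (b : κ → ℝ)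
    (y : ι → ℝ) (z : κ → ℝ) : ℝ :=
  quadObj Q q y + z ⬝ᵥ (G *ᵥ y - b)

def dualToPrimal [DecidableEq ι] (Q : Matrix ι ι ℝ) (q : ι → ℝ) (G : Matrix κ ι ℝ)
    (z : κ → ℝ) : ι → ℝ :=
  -(Q⁻¹ *ᵥ (q + Gᵀ *ᵥ z))

end

lemma Matrix.IsSymm.dotProduct_mulVec_comm {A : Matrix ι ι ℝ} (hA : A.IsSymm) (x y : ι → ℝ) :
    x ⬝ᵥ A *ᵥ y = y ⬝ᵥ A *ᵥ x := by
  rw [dotProduct_mulVec, ← mulVec_transpose, hA.eq, dotProduct_comm]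

lemma quadObj_add_smul {A : Matrix ι ι ℝ} (hA : A.IsSymm) (c x d : ι → ℝ) (t : ℝ) :
    quadObj A c (x + t • d) =
      quadObj A c x + t * ((A *ᵥ x + c) ⬝ᵥ d) + t ^ 2 / 2 * (d ⬝ᵥ A *ᵥ d) := by
  simp only [quadObj, mulVec_add, mulVec_smul, dotProduct_add, add_dotProduct, dotProduct_smul,
    smul_dotProduct, smul_eq_mul, hA.dotProduct_mulVec_comm x d, dotProduct_comm (A *ᵥ x) d]
  ring

lemma nonneg_of_forall_mul_add_sq_nonneg {a c : ℝ}
    (h : ∀ t : ℝ, 0 < t → t ≤ 1 → 0 ≤ t * a + t ^ 2 * c) : 0 ≤ a := by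
  by_contra! ha
  set t := min 1 (-a / (|c| + 1))
  have hc : 0 < |c| + 1 := by positivity
  have ht : 0 < t := lt_min one_pos (div_pos (neg_pos.2 ha) hc)
  have htc : t * (|c| + 1) ≤ -a := (le_div_iff₀ hc).1 (min_le_right _ _)
  have := h t ht (min_le_left _ _)
  nlinarith [le_abs_self c, mul_pos ht ht]

lemma IsMinOn.quadObj_grad_dotProduct_sub_nonneg {A : Matrix ι ι ℝ} (hA : A.IsSymm)
    {c x w : ι → ℝ} {s : Set (ι → ℝ)} (hs : Convex ℝ s) (hx : x ∈ s) (hw : w ∈ s)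
    (hmin : IsMinOn (quadObj A c) s x) : 0 ≤ (A *ᵥ x + c) ⬝ᵥ (w - x) := by
  refine nonneg_of_forall_mul_add_sq_nonneg (c := (w - x) ⬝ᵥ A *ᵥ (w - x) / 2) fun t ht ht1 => ?_
  have : quadObj A c x ≤ _ := hmin (hs.add_smul_sub_mem hx hw ⟨ht.le, ht1⟩)
  rw [quadObj_add_smul hA] at this
  linarith

lemma complementarity_of_isMinOn_quadObj_Icc [DecidableEq ι] {A : Matrix ι ι ℝ} (hA : A.IsSymm)
    {c x ρ : ι → ℝ} (hx : x ∈ Set.Icc 0 ρ) (hmin : IsMinOn (quadObj A c) (Set.Icc 0 ρ) x)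
    (i : ι) : ρ i * max 0 (-(A *ᵥ x + c) i) = x i * -(A *ᵥ x + c) i := by
  have hgrad : ∀ v, 0 ≤ v → v ≤ ρ i → 0 ≤ (A *ᵥ x + c) i * (v - x i) := fun v hv0 hvρ => by
    have hv : Function.update x i v ∈ Set.Icc 0 ρ :=
      ⟨le_update_iff.2 ⟨hv0, fun j _ => hx.1 j⟩, update_le_iff.2 ⟨hvρ, fun j _ => hx.2 j⟩⟩
    simpa [dotProduct, Function.update_apply, ite_sub] using
      hmin.quadObj_grad_dotProduct_sub_nonneg hA (convex_Icc 0 ρ) hx hv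
  have hx0 : 0 ≤ x i := hx.1 i
  have hxρ : x i ≤ ρ i := hx.2 i
  have h0 := hgrad 0 le_rfl (hx0.trans hxρ)
  have hρ := hgrad (ρ i) (hx0.trans hxρ) le_rfl
  rcases le_or_gt 0 ((A *ᵥ x + c) i) with hg | hg
  · rw [max_eq_left (by linarith)]
    nlinarith
  · have : x i = ρ i := by nlinarith
    rw [max_eq_right (by linarith), this]

lemma quadObj_eq_sq_sub [DecidableEq ι] {Q : Matrix ι ι ℝ} (hQ : Q.IsSymm) (hdet : IsUnit Q.det)
    (u y : ι → ℝ) :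
    quadObj Q u y =
      1 / 2 * ((y + Q⁻¹ *ᵥ u) ⬝ᵥ Q *ᵥ (y + Q⁻¹ *ᵥ u)) - 1 / 2 * (u ⬝ᵥ Q⁻¹ *ᵥ u) := by
  have hu : Q *ᵥ (Q⁻¹ *ᵥ u) = u := by rw [mulVec_mulVec, mul_nonsing_inv _ hdet, one_mulVec]
  simp only [quadObj, mulVec_add, hu, dotProduct_add, add_dotProduct,
    hQ.dotProduct_mulVec_comm (Q⁻¹ *ᵥ u) y, dotProduct_comm y u, dotProduct_comm (Q⁻¹ *ᵥ u) u]
  ring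

lemma dotProduct_mulVec_transpose {G : Matrix κ ι ℝ} (z : κ → ℝ) (v : ι → ℝ) :
    z ⬝ᵥ G *ᵥ v = (Gᵀ *ᵥ z) ⬝ᵥ v := by
  rw [dotProduct_mulVec, mulVec_transpose]

lemma quadObj_mul_mul_transpose {P : Matrix ι ι ℝ} (hP : P.IsSymm) (G : Matrix κ ι ℝ)
    (q : ι → ℝ) (z : κ → ℝ) :
    quadObj (G * P * Gᵀ) (G *ᵥ (P *ᵥ q)) z =
      1 / 2 * ((q + Gᵀ *ᵥ z) ⬝ᵥ P *ᵥ (q + Gᵀ *ᵥ z)) - 1 / 2 * (q ⬝ᵥ P *ᵥ q) := by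
  simp only [quadObj, ← mulVec_mulVec, dotProduct_mulVec_transpose, mulVec_add, dotProduct_add,
    add_dotProduct, hP.dotProduct_mulVec_comm (Gᵀ *ᵥ z) q, dotProduct_comm (G *ᵥ (P *ᵥ q)) z]
  ring

lemma lagrangian_eq [DecidableEq ι] {Q : Matrix ι ι ℝ} (hQ : Q.IsSymm) (hdet : IsUnit Q.det)
    (q : ι → ℝ) (G : Matrix κ ι ℝ) (b : κ → ℝ) (y : ι → ℝ) (z : κ → ℝ) :
    lagrangian Q q G b y z =
      1 / 2 * ((y - dualToPrimal Q q G z) ⬝ᵥ Q *ᵥ (y - dualToPrimal Q q G z))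
        - quadObj (G * Q⁻¹ * Gᵀ) (G *ᵥ (Q⁻¹ *ᵥ q) + b) z - 1 / 2 * (q ⬝ᵥ Q⁻¹ *ᵥ q) := by
  have hL : lagrangian Q q G b y z = quadObj Q (q + Gᵀ *ᵥ z) y - b ⬝ᵥ z := by
    simp only [lagrangian, quadObj, dotProduct_sub, dotProduct_mulVec_transpose, add_dotProduct,
      dotProduct_comm b z]
    ring
  have hψ : quadObj (G * Q⁻¹ * Gᵀ) (G *ᵥ (Q⁻¹ *ᵥ q) + b) z =
      quadObj (G * Q⁻¹ * Gᵀ) (G *ᵥ (Q⁻¹ *ᵥ q)) z + b ⬝ᵥ z := by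
    simp only [quadObj, add_dotProduct]
    ring
  rw [hL, hψ, quadObj_mul_mul_transpose hQ.inv, quadObj_eq_sq_sub hQ hdet, dualToPrimal,
    sub_neg_eq_add]
  ring

lemma lagrangian_le_l1Penalty {z ρ : κ → ℝ} (hz : z ∈ Set.Icc 0 ρ) (Q : Matrix ι ι ℝ)
    (q : ι → ℝ) (G : Matrix κ ι ℝ) (b : κ → ℝ) (y : ι → ℝ) :
    lagrangian Q q G b y z ≤ l1Penalty Q q G b ρ y := by
  rw [lagrangian, l1Penalty, dotProduct]
  refine add_le_add_right (Finset.sum_le_sum fun i _ => ?_) _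
  calc z i * (G *ᵥ y - b) i ≤ z i * max 0 ((G *ᵥ y) i - b i) :=
        mul_le_mul_of_nonneg_left (le_max_right _ _) (hz.1 i)
    _ ≤ ρ i * max 0 ((G *ᵥ y) i - b i) := mul_le_mul_of_nonneg_right (hz.2 i) (le_max_left _ _)

lemma mulVec_dualToPrimal_sub [DecidableEq ι] (Q : Matrix ι ι ℝ) (q : ι → ℝ) (G : Matrix κ ι ℝ)
    (b z : κ → ℝ) :
    G *ᵥ dualToPrimal Q q G z - b = -((G * Q⁻¹ * Gᵀ) *ᵥ z + (G *ᵥ (Q⁻¹ *ᵥ q) + b)) := by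
  simp only [dualToPrimal, mulVec_neg, mulVec_add, ← mulVec_mulVec]
  abel

lemma l1Penalty_dualToPrimal_eq_lagrangian [DecidableEq ι] [DecidableEq κ] {Q : Matrix ι ι ℝ}
    (hQ : Q.IsSymm) {q : ι → ℝ} {G : Matrix κ ι ℝ} {b ρ z : κ → ℝ} (hz : z ∈ Set.Icc 0 ρ)
    (hmin : IsMinOn (quadObj (G * Q⁻¹ * Gᵀ) (G *ᵥ (Q⁻¹ *ᵥ q) + b)) (Set.Icc 0 ρ) z) :
    l1Penalty Q q G b ρ (dualToPrimal Q q G z) = lagrangian Q q G b (dualToPrimal Q q G z) z := by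
  have hM : (G * Q⁻¹ * Gᵀ).IsSymm := by
    simp only [IsSymm, transpose_mul, transpose_transpose, hQ.inv.eq, Matrix.mul_assoc]
  rw [l1Penalty, lagrangian, dotProduct]
  congr 1
  refine Finset.sum_congr rfl fun i _ => ?_
  rw [← Pi.sub_apply, mulVec_dualToPrimal_sub]
  exact complementarity_of_isMinOn_quadObj_Icc hM hz hmin i

lemma l1Penalty_dualToPrimal_add_le [DecidableEq ι] [DecidableEq κ] {Q : Matrix ι ι ℝ}
    (hQ : Q.IsSymm) (hdet : IsUnit Q.det) {q : ι → ℝ} {G : Matrix κ ι ℝ} {b ρ z : κ → ℝ}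
    (hz : z ∈ Set.Icc 0 ρ)
    (hmin : IsMinOn (quadObj (G * Q⁻¹ * Gᵀ) (G *ᵥ (Q⁻¹ *ᵥ q) + b)) (Set.Icc 0 ρ) z)
    (y : ι → ℝ) :
    l1Penalty Q q G b ρ (dualToPrimal Q q G z) +
        1 / 2 * ((y - dualToPrimal Q q G z) ⬝ᵥ Q *ᵥ (y - dualToPrimal Q q G z)) ≤
      l1Penalty Q q G b ρ y :=
  calc _ = lagrangian Q q G b y z := by
        rw [l1Penalty_dualToPrimal_eq_lagrangian hQ hz hmin, lagrangian_eq hQ hdet,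
          lagrangian_eq hQ hdet, sub_self, zero_dotProduct]
        ring
    _ ≤ l1Penalty Q q G b ρ y := lagrangian_le_l1Penalty hz Q q G b y

lemma exists_isMinOn_quadObj_Icc (A : Matrix ι ι ℝ) (c : ι → ℝ) {ρ : ι → ℝ} (hρ : 0 ≤ ρ) :
    ∃ z ∈ Set.Icc 0 ρ, IsMinOn (quadObj A c) (Set.Icc 0 ρ) z := by
  refine isCompact_Icc.exists_isMinOn (Set.nonempty_Icc.2 hρ) (Continuous.continuousOn ?_)
  unfold quadObj
  fun_prop

/-- `y*` globally minimizes the vector ℓ1-penalty objective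
`φ_ρ(y) = ½yᵀQy + qᵀy + Σᵢ ρᵢ max(0, (Gy − b)ᵢ)` iff there is a global minimizer `ẑ*`
of the box-constrained QP `min ½ẑᵀMẑ + rᵀẑ, 0 ≤ ẑ ≤ ρ` with `y* = −Q⁻¹(q + Gᵀẑ*)`,
where `M = G Q⁻¹ Gᵀ` and `r = G Q⁻¹ q + b`. -/
theorem l1_penalty_iff_boxQP {m n : ℕ}
    (Q : Matrix (Fin m) (Fin m) ℝ) (hQ : Q.PosDef)
    (q : Fin m → ℝ) (G : Matrix (Fin n) (Fin m) ℝ) (b : Fin n → ℝ)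
    (ρ : Fin n → ℝ) (hρ : ∀ i, 0 < ρ i)
    (M : Matrix (Fin n) (Fin n) ℝ) (hM : M = G * Q⁻¹ * Gᵀ)
    (r : Fin n → ℝ) (hr : r = G.mulVec (Q⁻¹.mulVec q) + b)
    (φρ : (Fin m → ℝ) → ℝ)
    (hφρ : φρ = fun y => (1/2) * (y ⬝ᵥ Q.mulVec y) + q ⬝ᵥ y
        + ∑ i, ρ i * max 0 (G.mulVec y i - b i))
    (ystar : Fin m → ℝ) :
    (∀ y, φρ ystar ≤ φρ y) ↔
    ∃ zhat : Fin n → ℝ,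
      (∀ i, 0 ≤ zhat i ∧ zhat i ≤ ρ i) ∧
      (∀ z : Fin n → ℝ, (∀ i, 0 ≤ z i ∧ z i ≤ ρ i) →
        (1/2) * (zhat ⬝ᵥ M.mulVec zhat) + r ⬝ᵥ zhat ≤
          (1/2) * (z ⬝ᵥ M.mulVec z) + r ⬝ᵥ z) ∧
      ystar = -(Q⁻¹.mulVec (q + Gᵀ.mulVec zhat)) := by
  obtain rfl : φρ = l1Penalty Q q G b ρ := hφρ
  subst hM hr
  have hsymm : Q.IsSymm := isHermitian_iff_isSymm.1 hQ.1
  have hdet : IsUnit Q.det := hQ.det_pos.ne'.isUnit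
  have hIcc (z : Fin n → ℝ) : z ∈ Set.Icc 0 ρ ↔ ∀ i, 0 ≤ z i ∧ z i ≤ ρ i := by
    simp only [Set.mem_Icc, Pi.le_def, Pi.zero_apply, forall_and]
  change _ ↔ ∃ zhat, _ ∧ _ ∧ ystar = dualToPrimal Q q G zhat
  constructor
  · intro hopt
    obtain ⟨zhat, hz, hmin⟩ :=
      exists_isMinOn_quadObj_Icc (G * Q⁻¹ * Gᵀ) (G *ᵥ (Q⁻¹ *ᵥ q) + b) fun i => (hρ i).le
    refine ⟨zhat, (hIcc zhat).1 hz, fun z hz' => hmin ((hIcc z).2 hz'), ?_⟩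
    by_contra hne
    have hpos := hQ.dotProduct_mulVec_pos (sub_ne_zero.2 hne)
    rw [star_trivial] at hpos
    linarith [l1Penalty_dualToPrimal_add_le hsymm hdet hz hmin ystar, hopt (dualToPrimal Q q G zhat)]
  · rintro ⟨zhat, hz, hmin, rfl⟩ y
    have hnonneg := hQ.posSemidef.dotProduct_mulVec_nonneg (y - dualToPrimal Q q G zhat)
    rw [star_trivial] at hnonneg
    linarith [l1Penalty_dualToPrimal_add_le hsymm hdet ((hIcc zhat).2 hz)
      (fun z hz' => hmin z ((hIcc z).1 hz')) y]
end

section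
/- Let Q ∈ ℝ^{m×m} be symmetric positive definite, q ∈ ℝ^m, G ∈ ℝ^{n×m}, b ∈ ℝ^n. Suppose y* ∈ ℝ^m and ζ* ∈ ℝ^n satisfy the KKT conditions of the QP min_y ½yᵀQy + qᵀy subject to Gy ≤ b, namely: Qy* + q + Gᵀζ* = 0, Gy* ≤ b, ζ* ≥ 0, and ζ*_i (Gy* − b)_i = 0 for all i. If the scalar ρ > ‖ζ*‖_∞, then y* is the unique global minimizer of the ℓ1-penalty objective ψ(y) = ½yᵀQy + qᵀy + ρ Σ_{i=1}^n max(0, (Gy − b)_i), and in particular the minimizer of ψ coincides with the optimal solution of the constrained QP. -/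
open Matrix Finset

/-!
Expanding the quadratic around `y*` and using stationarity and complementary slackness gives
`ψ y = ψ y* + ½ (y - y*)ᵀ Q (y - y*) + Σᵢ (ρ max(0, rᵢ) - ζ*ᵢ rᵢ)`, where `r = Gy - b`.
Each summand is nonnegative because `0 ≤ ζ*ᵢ ≤ ρ`, and the quadratic term is positive
for `y ≠ y*` because `Q` is positive definite.
-/

variable {ι κ : Type*} [Fintype ι] [Fintype κ]

lemma mul_le_mul_max_zero {a ρ : ℝ} (t : ℝ) (ha : 0 ≤ a) (haρ : a ≤ ρ) :
    a * t ≤ ρ * max 0 t := by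
  rcases le_total t 0 with ht | ht
  · rw [max_eq_left ht, mul_zero]
    exact mul_nonpos_of_nonneg_of_nonpos ha ht
  · rw [max_eq_right ht]
    exact mul_le_mul_of_nonneg_right haρ ht

lemma dotProduct_le_mul_sum_max_zero {ζ : κ → ℝ} {ρ : ℝ} (hζ : ∀ i, 0 ≤ ζ i)
    (hζρ : ∀ i, ζ i ≤ ρ) (r : κ → ℝ) : ζ ⬝ᵥ r ≤ ρ * ∑ i, max 0 (r i) := by
  rw [mul_sum]
  exact sum_le_sum fun i _ => mul_le_mul_max_zero _ (hζ i) (hζρ i)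

lemma sum_max_zero_eq_zero {r : κ → ℝ} (hr : ∀ i, r i ≤ 0) : ∑ i, max 0 (r i) = 0 :=
  sum_eq_zero fun i _ => max_eq_left (hr i)

lemma Matrix.IsSymm.half_dotProduct_mulVec_add_dotProduct_eq {Q : Matrix ι ι ℝ}
    (hQ : Q.IsSymm) (q x y : ι → ℝ) :
    (1/2) * (y ⬝ᵥ Q *ᵥ y) + q ⬝ᵥ y
      = (1/2) * (x ⬝ᵥ Q *ᵥ x) + q ⬝ᵥ x + (Q *ᵥ x + q) ⬝ᵥ (y - x)
        + (1/2) * ((y - x) ⬝ᵥ Q *ᵥ (y - x)) := by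
  have hswap : y ⬝ᵥ Q *ᵥ x = x ⬝ᵥ Q *ᵥ y := by
    rw [dotProduct_mulVec, ← mulVec_transpose, hQ.eq, dotProduct_comm]
  have hswap' : Q *ᵥ x ⬝ᵥ y = x ⬝ᵥ Q *ᵥ y := by rw [dotProduct_comm, hswap]
  have hcomm : Q *ᵥ x ⬝ᵥ x = x ⬝ᵥ Q *ᵥ x := dotProduct_comm _ _
  simp only [mulVec_sub, dotProduct_sub, sub_dotProduct, add_dotProduct, hswap, hswap', hcomm]
  ring

lemma dotProduct_sub_eq_neg_of_kkt {Q : Matrix ι ι ℝ} {q x : ι → ℝ} {G : Matrix κ ι ℝ}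
    {b ζ : κ → ℝ} (hstat : Q *ᵥ x + q + Gᵀ *ᵥ ζ = 0)
    (hcomp : ∀ i, ζ i * ((G *ᵥ x) i - b i) = 0) (y : ι → ℝ) :
    (Q *ᵥ x + q) ⬝ᵥ (y - x) = -(ζ ⬝ᵥ (G *ᵥ y - b)) := by
  have hslack : ζ ⬝ᵥ (G *ᵥ x - b) = 0 := sum_eq_zero fun i _ => hcomp i
  rw [eq_neg_of_add_eq_zero_left hstat, neg_dotProduct, mulVec_transpose,
    ← dotProduct_mulVec, mulVec_sub]
  simp only [dotProduct_sub] at hslack ⊢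
  linarith

noncomputable def l1PenaltyObjective (Q : Matrix ι ι ℝ) (q : ι → ℝ) (G : Matrix κ ι ℝ)
    (b : κ → ℝ) (ρ : ℝ) (y : ι → ℝ) : ℝ :=
  (1/2) * (y ⬝ᵥ Q *ᵥ y) + q ⬝ᵥ y + ρ * ∑ i, max 0 ((G *ᵥ y) i - b i)

lemma l1PenaltyObjective_add_le_of_kkt {Q : Matrix ι ι ℝ} (hQ : Q.IsSymm) {q x : ι → ℝ}
    {G : Matrix κ ι ℝ} {b ζ : κ → ℝ} {ρ : ℝ}
    (hstat : Q *ᵥ x + q + Gᵀ *ᵥ ζ = 0) (hprimal : ∀ i, (G *ᵥ x) i ≤ b i)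
    (hdual : ∀ i, 0 ≤ ζ i) (hcomp : ∀ i, ζ i * ((G *ᵥ x) i - b i) = 0)
    (hζρ : ∀ i, ζ i ≤ ρ) (y : ι → ℝ) :
    l1PenaltyObjective Q q G b ρ x + (1/2) * ((y - x) ⬝ᵥ Q *ᵥ (y - x))
      ≤ l1PenaltyObjective Q q G b ρ y := by
  have hexp := hQ.half_dotProduct_mulVec_add_dotProduct_eq q x y
  have hgrad := dotProduct_sub_eq_neg_of_kkt hstat hcomp y
  have hpen := dotProduct_le_mul_sum_max_zero hdual hζρ (G *ᵥ y - b)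
  have hfeas : ∑ i, max 0 ((G *ᵥ x) i - b i) = 0 :=
    sum_max_zero_eq_zero fun i => sub_nonpos.2 (hprimal i)
  simp only [l1PenaltyObjective, hfeas, mul_zero, add_zero, Pi.sub_apply] at hpen ⊢
  linarith

/-- exact recovery of the ℓ1 penalty method. If `(y*, ζ*)` satisfies the KKT
conditions of `min ½yᵀQy + qᵀy s.t. Gy ≤ b` (with `Q` symmetric positive definite) and
`ρ > ‖ζ*‖_∞`, then `y*` is the unique global minimizer of
`ψ(y) = ½yᵀQy + qᵀy + ρ Σᵢ max(0, (Gy − b)ᵢ)`.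
Here `‖ζ*‖` is the sup norm on `Fin n → ℝ`. -/
theorem l1_exact_recovery {m n : ℕ}
    (Q : Matrix (Fin m) (Fin m) ℝ) (hQ : Q.PosDef)
    (q : Fin m → ℝ) (G : Matrix (Fin n) (Fin m) ℝ) (b : Fin n → ℝ)
    (ystar : Fin m → ℝ) (ζstar : Fin n → ℝ)
    (hstat : Q.mulVec ystar + q + Gᵀ.mulVec ζstar = 0)
    (hprimal : ∀ i, G.mulVec ystar i ≤ b i)
    (hdual : ∀ i, 0 ≤ ζstar i)
    (hcomp : ∀ i, ζstar i * (G.mulVec ystar i - b i) = 0)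
    (ρ : ℝ) (hρ : ‖ζstar‖ < ρ)
    (ψ : (Fin m → ℝ) → ℝ)
    (hψ : ψ = fun y => (1/2) * (y ⬝ᵥ Q.mulVec y) + q ⬝ᵥ y
        + ρ * ∑ i, max 0 (G.mulVec y i - b i)) :
    (∀ y, ψ ystar ≤ ψ y) ∧ (∀ y, y ≠ ystar → ψ ystar < ψ y) := by
  replace hψ : ψ = l1PenaltyObjective Q q G b ρ := hψ
  subst hψ
  have hζρ : ∀ i, ζstar i ≤ ρ := fun i =>
    ((Real.le_norm_self _).trans (norm_le_pi_norm ζstar i)).trans hρ.le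
  have hbound := l1PenaltyObjective_add_le_of_kkt (isHermitian_iff_isSymm.1 hQ.isHermitian)
    hstat hprimal hdual hcomp hζρ
  refine ⟨fun y => ?_, fun y hy => ?_⟩
  · have hnonneg : 0 ≤ (y - ystar) ⬝ᵥ Q *ᵥ (y - ystar) := by
      simpa using hQ.posSemidef.dotProduct_mulVec_nonneg (y - ystar)
    linarith [hbound y]
  · have hpos : 0 < (y - ystar) ⬝ᵥ Q *ᵥ (y - ystar) := by
      simpa using hQ.dotProduct_mulVec_pos (sub_ne_zero.2 hy)
    linarith [hbound y]
end

section
/- Let n ≥ 1 be an integer and ε > 0 with ε < 2n. Define η = (√2 − 1)/(√(2n) + √2 − 1), τ⁰ = 1/(1 − η), and N = ⌈ log(2n/ε) / (−2 log(√(2n)/(√(2n) + √2 − 1))) ⌉ + 1. Then 2n · ((1 − η)^N · τ⁰)² ≤ ε. Consequently, if the duality gap after k damped updates τ ← (1−η)τ starting from τ⁰ is bounded by 2n τ², then after exactly N iterations the duality gap satisfies vᵀs ≤ ε. -/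
open Real

/-- the exact iteration complexity. With `η = (√2 − 1)/(√(2n) + √2 − 1)`,
`τ⁰ = 1/(1 − η)`, and `N = ⌈log(2n/ε)/(−2 log(√(2n)/(√(2n)+√2−1)))⌉ + 1`, we have
`2n ((1−η)^N τ⁰)² ≤ ε`; consequently any duality gap bounded by `2n ((1−η)^N τ⁰)²`
is at most `ε`. -/
theorem iteration_complexity (n : ℕ) (hn : 1 ≤ n) (ε : ℝ) (hε : 0 < ε) (hεn : ε < 2 * n)
    (η : ℝ) (hη : η = (Real.sqrt 2 - 1) / (Real.sqrt (2 * n) + Real.sqrt 2 - 1))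
    (τ0 : ℝ) (hτ0 : τ0 = 1 / (1 - η))
    (N : ℕ)
    (hN : N = ⌈Real.log (2 * n / ε) /
        (-(2 * Real.log (Real.sqrt (2 * n) / (Real.sqrt (2 * n) + Real.sqrt 2 - 1))))⌉₊ + 1) :
    2 * n * ((1 - η) ^ N * τ0) ^ 2 ≤ ε ∧
      ∀ gap : ℝ, gap ≤ 2 * n * ((1 - η) ^ N * τ0) ^ 2 → gap ≤ ε := by
  have hn2 : (2:ℝ) ≤ 2 * n := by
    have : (1:ℝ) ≤ n := by exact_mod_cast hn
    linarith
  have ha1 : 1 < Real.sqrt 2 := by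
    nlinarith [Real.sq_sqrt (by norm_num : (0:ℝ) ≤ 2), Real.sqrt_nonneg 2]
  have hsa : Real.sqrt 2 ≤ Real.sqrt (2 * n) := Real.sqrt_le_sqrt hn2
  have hs0 : 0 < Real.sqrt (2 * n) := Real.sqrt_pos.mpr (by linarith)
  set s := Real.sqrt (2 * n) with hs
  set a := Real.sqrt 2 with ha
  set D := s + a - 1 with hD
  have hD0 : 0 < D := by simp only [hD]; linarith
  have hsD : s < D := by simp only [hD]; linarith
  set r := s / D with hr
  have hr0 : 0 < r := div_pos hs0 hD0
  have hr1 : r < 1 := (div_lt_one hD0).mpr hsD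
  have hηr : 1 - η = r := by
    rw [hη, hr]
    field_simp
    ring
  have hlog : Real.log r < 0 := Real.log_neg hr0 hr1
  -- the key quantity
  set M := ⌈Real.log (2 * ↑n / ε) / (-(2 * Real.log r))⌉₊ with hM
  have hL0 : 0 < Real.log (2 * ↑n / ε) := by
    apply Real.log_pos
    rw [lt_div_iff₀ hε]
    linarith
  have hceil : Real.log (2 * ↑n / ε) / (-(2 * Real.log r)) ≤ (M : ℝ) := Nat.le_ceil _
  have hkey : Real.log (2 * ↑n / ε) ≤ (M : ℝ) * (-(2 * Real.log r)) := by
    rw [div_le_iff₀ (by linarith)] at hceil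
    linarith
  -- rewrite the iterate
  have hpow : (1 - η) ^ N * τ0 = r ^ M := by
    rw [hηr, hτ0, hηr, hN, pow_succ]
    field_simp
  have hmain : 2 * (n:ℝ) * ((1 - η) ^ N * τ0) ^ 2 ≤ ε := by
    rw [hpow, ← pow_mul]
    have h1 : r ^ (M * 2) = Real.exp ((M * 2 : ℕ) * Real.log r) := by
      rw [← Real.log_pow, Real.exp_log (pow_pos hr0 _)]
    rw [h1]
    have h2 : 2 * (n:ℝ) = Real.exp (Real.log (2 * n)) := by
      rw [Real.exp_log (by linarith)]
    rw [h2, ← Real.exp_add]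
    rw [← Real.exp_log hε]
    apply Real.exp_le_exp.mpr
    have h3 : Real.log (2 * ↑n / ε) = Real.log (2 * ↑n) - Real.log ε :=
      Real.log_div (by linarith) (ne_of_gt hε)
    rw [h3] at hkey
    push_cast
    linarith
  exact ⟨hmain, fun gap h => le_trans h hmain⟩
end

section
/- Adopt the Newton-step setup: n ≥ 1, H̃ ∈ ℝ^{n×n} symmetric positive semidefinite, λ > 0, Ω = [I, −I] ∈ ℝ^{n×2n}, vectors v, s ∈ ℝ^{2n} with all components positive, β = √(vs), τ > 0, and (Δz, Δv, Δs) ∈ ℝ^n × ℝ^{2n} × ℝ^{2n} satisfying 2λH̃Δz + ΩΔv = 0, ΩᵀΔz + Δs = 0, and √(s/v)Δv + √(v/s)Δs = 2(τe − √(vs)). If the proximity measure ξ(β,τ) = ‖τe − β‖/τ satisfies ξ(β,τ) < 1, then the full Newton step is strictly feasible: v + Δv > 0 and s + Δs > 0 componentwise. -/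
open Matrix Finset

/-!
Scale the steps to `a = √(s/v) Δv` and `b = √(v/s) Δs`, so that `v + Δv = √(v/s) (β + a)`,
`s + Δs = √(s/v) (β + b)`, `a + b = 2q` with `q = τe − β`, and `a b = Δv Δs` componentwise.
The first two Newton equations give `Δvᵀ Δs = 2λ Δzᵀ H̃ Δz ≥ 0`, hence
`(aᵢ − qᵢ)² ≤ ∑ⱼ (aⱼ − qⱼ)² = ‖q‖² − aᵀb ≤ ‖q‖² < τ²`. Since `bᵢ − qᵢ = −(aᵢ − qᵢ)`, both
`β + a = (a − q) + τe` and `β + b = (b − q) + τe` are positive.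
-/

theorem dotProduct_nonneg_of_newton_system {m ι : Type*} [Fintype m] [Fintype ι]
    {H : Matrix m m ℝ} (hH : H.PosSemidef) {c : ℝ} (hc : 0 ≤ c) (Ω : Matrix m ι ℝ)
    {Δz : m → ℝ} {Δv Δs : ι → ℝ}
    (h₁ : c • (H *ᵥ Δz) + Ω *ᵥ Δv = 0) (h₂ : Ωᵀ *ᵥ Δz + Δs = 0) :
    0 ≤ Δv ⬝ᵥ Δs := by
  have hΔs : Δs = -(Ωᵀ *ᵥ Δz) := (neg_eq_of_add_eq_zero_right h₂).symm
  have hΩΔv : Ω *ᵥ Δv = -(c • (H *ᵥ Δz)) := (neg_eq_of_add_eq_zero_right h₁).symm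
  rw [hΔs, dotProduct_neg, dotProduct_mulVec, vecMul_transpose, hΩΔv, neg_dotProduct,
    smul_dotProduct, neg_neg, smul_eq_mul, dotProduct_comm]
  exact mul_nonneg hc (by simpa only [star_trivial] using hH.dotProduct_mulVec_nonneg Δz)

theorem sq_sub_le_sum_sq_of_add_eq_two_mul {ι : Type*} [Fintype ι] {a b q : ι → ℝ}
    (hab : ∀ i, a i + b i = 2 * q i) (hprod : 0 ≤ ∑ i, a i * b i) (i : ι) :
    (a i - q i) ^ 2 ≤ ∑ j, q j ^ 2 := by
  have hsq : ∀ j, (a j - q j) ^ 2 = q j ^ 2 - a j * b j := fun j => by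
    rw [show b j = 2 * q j - a j by linarith [hab j]]
    ring
  calc (a i - q i) ^ 2 ≤ ∑ j, (a j - q j) ^ 2 :=
        single_le_sum (fun j _ => sq_nonneg (a j - q j)) (mem_univ i)
    _ = ∑ j, q j ^ 2 - ∑ j, a j * b j := by simp only [hsq, sum_sub_distrib]
    _ ≤ ∑ j, q j ^ 2 := sub_le_self _ hprod

theorem add_pos_of_add_eq_two_mul_sub {ι : Type*} [Fintype ι] {a b β : ι → ℝ} {τ : ℝ}
    (hab : ∀ i, a i + b i = 2 * (τ - β i)) (hprod : 0 ≤ ∑ i, a i * b i)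
    (hprox : ∑ i, (τ - β i) ^ 2 < τ ^ 2) (hτ : 0 < τ) (i : ι) :
    0 < β i + a i ∧ 0 < β i + b i := by
  have hdev : |a i - (τ - β i)| < τ := abs_lt_of_sq_lt_sq
    ((sq_sub_le_sum_sq_of_add_eq_two_mul (q := fun i => τ - β i) hab hprod i).trans_lt hprox) hτ.le
  obtain ⟨hlow, hhigh⟩ := abs_lt.mp hdev
  constructor <;> linarith [hab i]

theorem sqrt_div_mul_sqrt_div_cancel {x y : ℝ} (hx : 0 < x) (hy : 0 < y) :
    √(x / y) * √(y / x) = 1 := by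
  rw [← inv_div y x, Real.sqrt_inv, inv_mul_cancel₀ (Real.sqrt_pos.2 (div_pos hy hx)).ne']

theorem add_eq_sqrt_div_mul_sqrt_mul_add {v s : ℝ} (hv : 0 < v) (hs : 0 < s) (d : ℝ) :
    v + d = √(v / s) * (√(v * s) + √(s / v) * d) := by
  have hvs : √(v / s) * √(v * s) = v := by
    rw [← Real.sqrt_mul (div_pos hv hs).le, show v / s * (v * s) = v ^ 2 by field_simp,
      Real.sqrt_sq hv.le]
  rw [mul_add, hvs, ← mul_assoc, sqrt_div_mul_sqrt_div_cancel hv hs, one_mul]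

theorem full_newton_step_strictly_feasible_general {n : ℕ}
    (Htil : Matrix (Fin n) (Fin n) ℝ) (hH : Htil.PosSemidef)
    (lam : ℝ) (hlam : 0 < lam)
    (Ω : Matrix (Fin n) (Fin n ⊕ Fin n) ℝ)
    (v s : Fin n ⊕ Fin n → ℝ) (hv : ∀ i, 0 < v i) (hs : ∀ i, 0 < s i)
    (β : Fin n ⊕ Fin n → ℝ) (hβ : β = fun i => Real.sqrt (v i * s i))
    (τ : ℝ) (hτ : 0 < τ)
    (Δz : Fin n → ℝ) (Δv Δs : Fin n ⊕ Fin n → ℝ)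
    (heq1 : (2 * lam) • Htil.mulVec Δz + Ω.mulVec Δv = 0)
    (heq2 : Ωᵀ.mulVec Δz + Δs = 0)
    (heq3 : ∀ i, Real.sqrt (s i / v i) * Δv i + Real.sqrt (v i / s i) * Δs i
        = 2 * (τ - Real.sqrt (v i * s i)))
    (hξ : Real.sqrt (∑ i, (τ - β i) ^ 2) / τ < 1) :
    (∀ i, 0 < v i + Δv i) ∧ (∀ i, 0 < s i + Δs i) := by
  subst hβ
  have hprod : 0 ≤ ∑ i, √(s i / v i) * Δv i * (√(v i / s i) * Δs i) := by
    refine (dotProduct_nonneg_of_newton_system hH (by positivity) Ω heq1 heq2).trans_eq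
      (sum_congr rfl fun i _ => ?_)
    rw [mul_mul_mul_comm, sqrt_div_mul_sqrt_div_cancel (hs i) (hv i), one_mul]
  have hprox : ∑ i, (τ - √(v i * s i)) ^ 2 < τ ^ 2 := (Real.sqrt_lt' hτ).1 ((div_lt_one hτ).1 hξ)
  have hpos := add_pos_of_add_eq_two_mul_sub heq3 hprod hprox hτ
  refine ⟨fun i => ?_, fun i => ?_⟩
  · rw [add_eq_sqrt_div_mul_sqrt_mul_add (hv i) (hs i)]
    exact mul_pos (Real.sqrt_pos.2 (div_pos (hv i) (hs i))) (hpos i).1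
  · rw [add_eq_sqrt_div_mul_sqrt_mul_add (hs i) (hv i), mul_comm (s i) (v i)]
    exact mul_pos (Real.sqrt_pos.2 (div_pos (hs i) (hv i))) (hpos i).2

/-- strict feasibility of the full Newton step. In the Newton-step setup with
`Ω = [I, −I]`, if the proximity measure `ξ(β,τ) = ‖τe − β‖/τ < 1` (Euclidean norm),
then `v + Δv > 0` and `s + Δs > 0` componentwise. -/
theorem full_newton_step_strictly_feasible {n : ℕ} (hn : 1 ≤ n)
    (Htil : Matrix (Fin n) (Fin n) ℝ) (hH : Htil.PosSemidef)
    (lam : ℝ) (hlam : 0 < lam)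
    (Ω : Matrix (Fin n) (Fin n ⊕ Fin n) ℝ)
    (hΩ : Ω = Matrix.fromCols (1 : Matrix (Fin n) (Fin n) ℝ)
      (-(1 : Matrix (Fin n) (Fin n) ℝ)))
    (v s : Fin n ⊕ Fin n → ℝ) (hv : ∀ i, 0 < v i) (hs : ∀ i, 0 < s i)
    (β : Fin n ⊕ Fin n → ℝ) (hβ : β = fun i => Real.sqrt (v i * s i))
    (τ : ℝ) (hτ : 0 < τ)
    (Δz : Fin n → ℝ) (Δv Δs : Fin n ⊕ Fin n → ℝ)
    (heq1 : (2 * lam) • Htil.mulVec Δz + Ω.mulVec Δv = 0)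
    (heq2 : Ωᵀ.mulVec Δz + Δs = 0)
    (heq3 : ∀ i, Real.sqrt (s i / v i) * Δv i + Real.sqrt (v i / s i) * Δs i
        = 2 * (τ - Real.sqrt (v i * s i)))
    (hξ : Real.sqrt (∑ i, (τ - β i) ^ 2) / τ < 1) :
    (∀ i, 0 < v i + Δv i) ∧ (∀ i, 0 < s i + Δs i) :=
  full_newton_step_strictly_feasible_general Htil hH lam hlam Ω v s hv hs β hβ τ hτ Δz Δv Δs heq1
    heq2 heq3 hξ
end

section
/- Let v, s ∈ ℝ^{2n} have all components positive, let τ > 0, β = √(vs), and suppose Δv, Δs ∈ ℝ^{2n} satisfy √(s/v)Δv + √(v/s)Δs = 2(τe − β) and ΔvᵀΔs ≥ 0. Then the iterates v₊ = v + Δv and s₊ = s + Δs after a full Newton step satisfy the duality gap bound v₊ᵀ s₊ ≤ 2n τ². -/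
/-!
Rescale each coordinate pair by `d = √(v/s)`: then `v + Δv = d (β + √(s/v) Δv)` and
`s + Δs = d⁻¹ (β + √(v/s) Δs)`, so `(v + Δv)(s + Δs)` is the product of two numbers whose sum is
`2β + 2(τ - β) = 2τ`. By AM-GM every coordinate of `v₊ s₊` is at most `τ²`, and summing over
the `2n` coordinates gives the bound.
-/

open Matrix Finset Real

lemma mul_le_sq_of_add_eq_two_mul {x y τ : ℝ} (h : x + y = 2 * τ) : x * y ≤ τ ^ 2 := by
  obtain rfl : τ = (x + y) / 2 := by linarith
  nlinarith [sq_nonneg (x - y)]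

lemma sqrt_div_mul_self {a b : ℝ} (ha : 0 < a) (hb : 0 ≤ b) : √(b / a) * a = √(a * b) :=
  calc √(b / a) * a = √(b / a) * √(a ^ 2) := by rw [sqrt_sq ha.le]
    _ = √(a * b) := by
      rw [← sqrt_mul (div_nonneg hb ha.le)]
      congr 1
      field_simp

lemma sqrt_div_mul_sqrt_div {a b : ℝ} (ha : 0 < a) (hb : 0 < b) : √(a / b) * √(b / a) = 1 := by
  rw [← sqrt_mul (div_nonneg ha.le hb.le), show a / b * (b / a) = 1 by field_simp, sqrt_one]

lemma add_mul_add_eq_scaled {v s Δv Δs : ℝ} (hv : 0 < v) (hs : 0 < s) :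
    (v + Δv) * (s + Δs) = (√(v * s) + √(s / v) * Δv) * (√(v * s) + √(v / s) * Δs) :=
  calc (v + Δv) * (s + Δs) = (√(s / v) * √(v / s)) * ((v + Δv) * (s + Δs)) := by
        rw [sqrt_div_mul_sqrt_div hs hv, one_mul]
    _ = (√(s / v) * v + √(s / v) * Δv) * (√(v / s) * s + √(v / s) * Δs) := by ring
    _ = _ := by rw [sqrt_div_mul_self hv hs.le, sqrt_div_mul_self hs hv.le, mul_comm s v]

lemma newton_step_mul_le_sq {v s τ Δv Δs : ℝ} (hv : 0 < v) (hs : 0 < s)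
    (h : √(s / v) * Δv + √(v / s) * Δs = 2 * (τ - √(v * s))) :
    (v + Δv) * (s + Δs) ≤ τ ^ 2 := by
  rw [add_mul_add_eq_scaled hv hs]
  exact mul_le_sq_of_add_eq_two_mul (by linarith)

lemma newton_step_dotProduct_le {ι : Type*} [Fintype ι] {v s Δv Δs : ι → ℝ} {τ : ℝ}
    (hv : ∀ i, 0 < v i) (hs : ∀ i, 0 < s i)
    (h : ∀ i, √(s i / v i) * Δv i + √(v i / s i) * Δs i = 2 * (τ - √(v i * s i))) :
    (v + Δv) ⬝ᵥ (s + Δs) ≤ Fintype.card ι * τ ^ 2 :=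
  calc (v + Δv) ⬝ᵥ (s + Δs) = ∑ i, (v i + Δv i) * (s i + Δs i) := rfl
    _ ≤ ∑ _i : ι, τ ^ 2 := sum_le_sum fun i _ => newton_step_mul_le_sq (hv i) (hs i) (h i)
    _ = Fintype.card ι * τ ^ 2 := by rw [sum_const, card_univ, nsmul_eq_mul]

theorem duality_gap_after_newton_step_general {n : ℕ}
    (v s : Fin (2 * n) → ℝ) (hv : ∀ i, 0 < v i) (hs : ∀ i, 0 < s i)
    (τ : ℝ)
    (β : Fin (2 * n) → ℝ) (hβ : β = fun i => Real.sqrt (v i * s i))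
    (Δv Δs : Fin (2 * n) → ℝ)
    (heq : ∀ i, Real.sqrt (s i / v i) * Δv i + Real.sqrt (v i / s i) * Δs i
        = 2 * (τ - β i)) :
    (v + Δv) ⬝ᵥ (s + Δs) ≤ 2 * n * τ ^ 2 := by
  subst hβ
  simpa using newton_step_dotProduct_le hv hs heq

/-- duality gap after a full Newton step. If `v, s > 0`, `τ > 0`,
`√(s/v)Δv + √(v/s)Δs = 2(τe − √(vs))` and `ΔvᵀΔs ≥ 0`, then
`(v + Δv)ᵀ(s + Δs) ≤ 2n τ²`. -/
theorem duality_gap_after_newton_step {n : ℕ}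
    (v s : Fin (2 * n) → ℝ) (hv : ∀ i, 0 < v i) (hs : ∀ i, 0 < s i)
    (τ : ℝ) (hτ : 0 < τ)
    (β : Fin (2 * n) → ℝ) (hβ : β = fun i => Real.sqrt (v i * s i))
    (Δv Δs : Fin (2 * n) → ℝ)
    (heq : ∀ i, Real.sqrt (s i / v i) * Δv i + Real.sqrt (v i / s i) * Δs i
        = 2 * (τ - β i))
    (hΔ : 0 ≤ Δv ⬝ᵥ Δs) :
    (v + Δv) ⬝ᵥ (s + Δs) ≤ 2 * n * τ ^ 2 :=
  duality_gap_after_newton_step_general v s hv hs τ β hβ Δv Δs heq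
end

section
/- Adopt the Newton-step setup: n ≥ 1, H̃ ∈ ℝ^{n×n} symmetric positive semidefinite, λ > 0, Ω = [I, −I] ∈ ℝ^{n×2n}, vectors v, s ∈ ℝ^{2n} with all components positive, β = √(vs), τ > 0, and (Δz, Δv, Δs) satisfying 2λH̃Δz + ΩΔv = 0, ΩᵀΔz + Δs = 0, and √(s/v)Δv + √(v/s)Δs = 2(τe − √(vs)). Suppose ξ = ξ(β,τ) = ‖τe − β‖/τ < 1, let 0 < η < 1, τ₊ = (1 − η)τ, v₊ = v + Δv, s₊ = s + Δs, and β₊ = √(v₊ s₊). Then ξ(β₊, τ₊) ≤ ξ²/(1 + √(1 − ξ²)) + η√(2n)/(1 − η). -/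
open Matrix Finset

/-!
Write `a = √(s/v) Δv` and `b = √(v/s) Δs`. The third Newton equation says `a + b = 2(τe − β)`,
whence `v₊ s₊ = τ² − q` with `q = ((a − b)/2)² = (τ − β)² − Δv Δs ≥ 0` componentwise. The first
two equations give `Δvᵀ Δs = 2λ Δzᵀ H̃ Δz ≥ 0`, so `∑ q ≤ ‖τe − β‖² = ξ²τ²`. Hence
`τ − β₊ᵢ = qᵢ / (τ + β₊ᵢ) ≤ qᵢ / (τ (1 + √(1 − ξ²)))`, and as `ℓ² ≤ ℓ¹` on nonnegative vectors,
`‖τe − β₊‖ ≤ ξ²τ / (1 + √(1 − ξ²))`. Finally `τ₊e − β₊ = (1 − η)(τe − β₊) − η β₊` with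
`0 ≤ β₊ ≤ τe`, so `‖β₊‖ ≤ √(2n) τ`.
-/

namespace NewtonStep

lemma sqrt_mul_mul_sqrt_div {x y : ℝ} (hx : 0 < x) (hy : 0 ≤ y) :
    √(x * y) * √(y / x) = y := by
  rw [← Real.sqrt_mul (by positivity), show x * y * (y / x) = y ^ 2 by field_simp,
    Real.sqrt_sq hy]

lemma sqrt_div_mul_sqrt_div {x y : ℝ} (hx : 0 < x) (hy : 0 < y) : √(x / y) * √(y / x) = 1 := by
  rw [← Real.sqrt_mul (by positivity), show x / y * (y / x) = 1 by field_simp, Real.sqrt_one]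

section ScaledNewtonEquation

variable {v s dv ds τ : ℝ} (hv : 0 < v) (hs : 0 < s)
  (h : √(s / v) * dv + √(v / s) * ds = 2 * (τ - √(v * s)))
include hv hs h

lemma mul_le_sq_of_scaled_newton : dv * ds ≤ (τ - √(v * s)) ^ 2 := by
  have hab : √(s / v) * dv * (√(v / s) * ds) = dv * ds := by
    linear_combination dv * ds * sqrt_div_mul_sqrt_div hs hv
  have hdefect : (τ - √(v * s)) ^ 2 - dv * ds = ((√(s / v) * dv - √(v / s) * ds) / 2) ^ 2 := by
    linear_combination
      (-(τ - √(v * s) + (√(s / v) * dv + √(v / s) * ds) / 2) / 2) * h + hab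
  exact sub_nonneg.mp (hdefect ▸ sq_nonneg _)

lemma add_mul_add_eq_of_scaled_newton :
    (v + dv) * (s + ds) = τ ^ 2 - ((τ - √(v * s)) ^ 2 - dv * ds) := by
  have hβ := Real.sq_sqrt (mul_pos hv hs).le
  have ha := sqrt_mul_mul_sqrt_div hv hs.le
  have hb : √(v * s) * √(v / s) = v := by rw [mul_comm v s]; exact sqrt_mul_mul_sqrt_div hs hv.le
  linear_combination -hβ + √(v * s) * h - dv * ha - ds * hb

end ScaledNewtonEquation

lemma sqrt_sq_sub_le {τ q : ℝ} (hτ : 0 ≤ τ) (hq : 0 ≤ q) : √(τ ^ 2 - q) ≤ τ :=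
  Real.sqrt_le_iff.mpr ⟨hτ, by linarith⟩

lemma sub_sqrt_sq_sub_le {τ q ξ : ℝ} (hτ : 0 < τ) (hq : 0 ≤ q) (hqξ : q ≤ ξ ^ 2 * τ ^ 2)
    (hξ : ξ ^ 2 ≤ 1) : τ - √(τ ^ 2 - q) ≤ q / (τ * (1 + √(1 - ξ ^ 2))) := by
  set r := √(τ ^ 2 - q)
  have hr_sq : r ^ 2 = τ ^ 2 - q := Real.sq_sqrt (by nlinarith)
  have hr_le : r ≤ τ := sqrt_sq_sub_le hτ.le hq
  have hr_ge : τ * √(1 - ξ ^ 2) ≤ r := by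
    rw [← Real.sqrt_sq hτ.le, ← Real.sqrt_mul (sq_nonneg τ)]
    exact Real.sqrt_le_sqrt (by nlinarith)
  rw [le_div_iff₀ (by positivity)]
  calc (τ - r) * (τ * (1 + √(1 - ξ ^ 2))) = (τ - r) * (τ + τ * √(1 - ξ ^ 2)) := by ring
    _ ≤ (τ - r) * (τ + r) := by gcongr
    _ = q := by linear_combination -hr_sq

section Vectors

variable {ι : Type*} [Fintype ι]

lemma sqrt_sum_sq_le_sum {x : ι → ℝ} (hx : ∀ i, 0 ≤ x i) : √(∑ i, x i ^ 2) ≤ ∑ i, x i :=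
  Real.sqrt_le_left (sum_nonneg fun i _ ↦ hx i) |>.mpr (sum_sq_le_sq_sum_of_nonneg fun i _ ↦ hx i)

lemma sqrt_sum_sq_eq_norm (x : ι → ℝ) :
    √(∑ i, x i ^ 2) = ‖(WithLp.toLp 2 x : EuclideanSpace ℝ ι)‖ := by
  simp [EuclideanSpace.norm_eq]

lemma dotProduct_nonneg_of_newton_system {m : Type*} [Fintype m] {H : Matrix m m ℝ}
    (hH : H.PosSemidef) {c : ℝ} (hc : 0 ≤ c) {Ω : Matrix m ι ℝ} {Δz : m → ℝ} {Δv Δs : ι → ℝ}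
    (h₁ : c • H *ᵥ Δz + Ω *ᵥ Δv = 0) (h₂ : Ωᵀ *ᵥ Δz + Δs = 0) : 0 ≤ Δv ⬝ᵥ Δs := by
  have hΔs : Δs = -(Ωᵀ *ᵥ Δz) := eq_neg_of_add_eq_zero_right h₂
  have hΩΔv : Ω *ᵥ Δv = -(c • H *ᵥ Δz) := eq_neg_of_add_eq_zero_right h₁
  have : Δv ⬝ᵥ Δs = c * (Δz ⬝ᵥ H *ᵥ Δz) := by
    rw [hΔs, dotProduct_neg, dotProduct_mulVec, vecMul_transpose, hΩΔv, neg_dotProduct, neg_neg,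
      smul_dotProduct, dotProduct_comm, smul_eq_mul]
  exact this ▸ mul_nonneg hc (hH.dotProduct_mulVec_nonneg Δz)

lemma sqrt_sum_sq_sub_sqrt_le {τ ξ : ℝ} {q : ι → ℝ} (hτ : 0 < τ) (hq : ∀ i, 0 ≤ q i)
    (hq_sum : ∑ i, q i ≤ ξ ^ 2 * τ ^ 2) (hξ : ξ ^ 2 ≤ 1) :
    √(∑ i, (τ - √(τ ^ 2 - q i)) ^ 2) ≤ ξ ^ 2 * τ / (1 + √(1 - ξ ^ 2)) := by
  have hqξ (i : ι) : q i ≤ ξ ^ 2 * τ ^ 2 :=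
    (single_le_sum (fun j _ ↦ hq j) (mem_univ i)).trans hq_sum
  calc √(∑ i, (τ - √(τ ^ 2 - q i)) ^ 2) ≤ ∑ i, (τ - √(τ ^ 2 - q i)) :=
        sqrt_sum_sq_le_sum fun i ↦ sub_nonneg.mpr (sqrt_sq_sub_le hτ.le (hq i))
    _ ≤ ∑ i, q i / (τ * (1 + √(1 - ξ ^ 2))) :=
        sum_le_sum fun i _ ↦ sub_sqrt_sq_sub_le hτ (hq i) (hqξ i) hξ
    _ = (∑ i, q i) / (τ * (1 + √(1 - ξ ^ 2))) := (sum_div ..).symm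
    _ ≤ ξ ^ 2 * τ ^ 2 / (τ * (1 + √(1 - ξ ^ 2))) := by gcongr
    _ = ξ ^ 2 * τ / (1 + √(1 - ξ ^ 2)) := by field_simp

lemma sqrt_sum_sq_shift_div_le {x : ι → ℝ} {τ η δ : ℝ} (hx₀ : ∀ i, 0 ≤ x i) (hxτ : ∀ i, x i ≤ τ)
    (hτ : 0 < τ) (hη₀ : 0 ≤ η) (hη₁ : η < 1) (h : √(∑ i, (τ - x i) ^ 2) ≤ δ * τ) :
    √(∑ i, ((1 - η) * τ - x i) ^ 2) / ((1 - η) * τ) ≤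
      δ + η * √(Fintype.card ι) / (1 - η) := by
  have hη : 0 < 1 - η := sub_pos.mpr hη₁
  have hx : √(∑ i, x i ^ 2) ≤ √(Fintype.card ι) * τ :=
    calc √(∑ i, x i ^ 2) ≤ √(∑ _i : ι, τ ^ 2) :=
          Real.sqrt_le_sqrt (sum_le_sum fun i _ ↦ pow_le_pow_left₀ (hx₀ i) (hxτ i) 2)
      _ = √(Fintype.card ι) * τ := by
          rw [sum_const, card_univ, nsmul_eq_mul, Real.sqrt_mul (Nat.cast_nonneg _),
            Real.sqrt_sq hτ.le]
  have hsplit : √(∑ i, ((1 - η) * τ - x i) ^ 2) ≤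
      (1 - η) * √(∑ i, (τ - x i) ^ 2) + η * √(∑ i, x i ^ 2) := by
    simp only [sqrt_sum_sq_eq_norm]
    have : (WithLp.toLp 2 fun i ↦ (1 - η) * τ - x i : EuclideanSpace ℝ ι) =
        (1 - η) • WithLp.toLp 2 (fun i ↦ τ - x i) - η • WithLp.toLp 2 x := by
      ext i; simp only [PiLp.sub_apply, PiLp.smul_apply, smul_eq_mul]; ring
    rw [this]
    refine (norm_sub_le _ _).trans_eq ?_
    rw [norm_smul, norm_smul, Real.norm_of_nonneg hη.le, Real.norm_of_nonneg hη₀]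
  rw [div_le_iff₀ (by positivity)]
  calc √(∑ i, ((1 - η) * τ - x i) ^ 2) ≤ (1 - η) * (δ * τ) + η * (√(Fintype.card ι) * τ) := by
        refine hsplit.trans ?_; gcongr
    _ = (δ + η * √(Fintype.card ι) / (1 - η)) * ((1 - η) * τ) := by field_simp

end Vectors

end NewtonStep

open NewtonStep

theorem proximity_after_newton_step_general {n : ℕ}
    (Htil : Matrix (Fin n) (Fin n) ℝ) (hH : Htil.PosSemidef)
    (lam : ℝ) (hlam : 0 < lam)
    (Ω : Matrix (Fin n) (Fin n ⊕ Fin n) ℝ)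
    (v s : Fin n ⊕ Fin n → ℝ) (hv : ∀ i, 0 < v i) (hs : ∀ i, 0 < s i)
    (β : Fin n ⊕ Fin n → ℝ) (hβ : β = fun i => Real.sqrt (v i * s i))
    (τ : ℝ) (hτ : 0 < τ)
    (Δz : Fin n → ℝ) (Δv Δs : Fin n ⊕ Fin n → ℝ)
    (heq1 : (2 * lam) • Htil.mulVec Δz + Ω.mulVec Δv = 0)
    (heq2 : Ωᵀ.mulVec Δz + Δs = 0)
    (heq3 : ∀ i, Real.sqrt (s i / v i) * Δv i + Real.sqrt (v i / s i) * Δs i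
        = 2 * (τ - Real.sqrt (v i * s i)))
    (ξ : ℝ) (hξdef : ξ = Real.sqrt (∑ i, (τ - β i) ^ 2) / τ) (hξ : ξ < 1)
    (η : ℝ) (hη0 : 0 < η) (hη1 : η < 1)
    (τplus : ℝ) (hτplus : τplus = (1 - η) * τ)
    (vplus splus : Fin n ⊕ Fin n → ℝ)
    (hvplus : vplus = v + Δv) (hsplus : splus = s + Δs)
    (βplus : Fin n ⊕ Fin n → ℝ)
    (hβplus : βplus = fun i => Real.sqrt (vplus i * splus i)) :
    Real.sqrt (∑ i, (τplus - βplus i) ^ 2) / τplus ≤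
      ξ ^ 2 / (1 + Real.sqrt (1 - ξ ^ 2)) + η * Real.sqrt (2 * n) / (1 - η) := by
  subst hβ hτplus hvplus hsplus hβplus
  set q : Fin n ⊕ Fin n → ℝ := fun i ↦ (τ - √(v i * s i)) ^ 2 - Δv i * Δs i
  have hq_nonneg (i) : 0 ≤ q i :=
    sub_nonneg.mpr (mul_le_sq_of_scaled_newton (hv i) (hs i) (heq3 i))
  have hq_sum : ∑ i, q i ≤ ξ ^ 2 * τ ^ 2 := by
    have hξτ : ∑ i, (τ - √(v i * s i)) ^ 2 = ξ ^ 2 * τ ^ 2 := by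
      rw [hξdef, div_pow, Real.sq_sqrt (by positivity), div_mul_cancel₀ _ (by positivity)]
    have := dotProduct_nonneg_of_newton_system hH (by positivity) heq1 heq2
    simp only [q, sum_sub_distrib, hξτ]
    exact sub_le_self _ this
  have hξ_sq : ξ ^ 2 ≤ 1 := by
    nlinarith [show 0 ≤ ξ from hξdef ▸ by positivity]
  have hβplus (i) : √((v + Δv) i * (s + Δs) i) = √(τ ^ 2 - q i) := by
    rw [Pi.add_apply, Pi.add_apply, add_mul_add_eq_of_scaled_newton (hv i) (hs i) (heq3 i)]
  have hcard : (Fintype.card (Fin n ⊕ Fin n) : ℝ) = 2 * n := by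
    simp only [Fintype.card_sum, Fintype.card_fin, Nat.cast_add]; ring
  simp only [hβplus]
  rw [← hcard]
  refine sqrt_sum_sq_shift_div_le (fun i ↦ Real.sqrt_nonneg _)
    (fun i ↦ sqrt_sq_sub_le hτ.le (hq_nonneg i)) hτ hη0.le hη1 ?_
  rw [div_mul_eq_mul_div]
  exact sqrt_sum_sq_sub_sqrt_le hτ hq_nonneg hq_sum hξ_sq

/-- decrease of the proximity measure after one full Newton step with the
damped update `τ₊ = (1 − η)τ`:
`ξ(β₊, τ₊) ≤ ξ²/(1 + √(1 − ξ²)) + η√(2n)/(1 − η)`. -/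
theorem proximity_after_newton_step {n : ℕ} (hn : 1 ≤ n)
    (Htil : Matrix (Fin n) (Fin n) ℝ) (hH : Htil.PosSemidef)
    (lam : ℝ) (hlam : 0 < lam)
    (Ω : Matrix (Fin n) (Fin n ⊕ Fin n) ℝ)
    (hΩ : Ω = Matrix.fromCols (1 : Matrix (Fin n) (Fin n) ℝ)
      (-(1 : Matrix (Fin n) (Fin n) ℝ)))
    (v s : Fin n ⊕ Fin n → ℝ) (hv : ∀ i, 0 < v i) (hs : ∀ i, 0 < s i)
    (β : Fin n ⊕ Fin n → ℝ) (hβ : β = fun i => Real.sqrt (v i * s i))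
    (τ : ℝ) (hτ : 0 < τ)
    (Δz : Fin n → ℝ) (Δv Δs : Fin n ⊕ Fin n → ℝ)
    (heq1 : (2 * lam) • Htil.mulVec Δz + Ω.mulVec Δv = 0)
    (heq2 : Ωᵀ.mulVec Δz + Δs = 0)
    (heq3 : ∀ i, Real.sqrt (s i / v i) * Δv i + Real.sqrt (v i / s i) * Δs i
        = 2 * (τ - Real.sqrt (v i * s i)))
    (ξ : ℝ) (hξdef : ξ = Real.sqrt (∑ i, (τ - β i) ^ 2) / τ) (hξ : ξ < 1)
    (η : ℝ) (hη0 : 0 < η) (hη1 : η < 1)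
    (τplus : ℝ) (hτplus : τplus = (1 - η) * τ)
    (vplus splus : Fin n ⊕ Fin n → ℝ)
    (hvplus : vplus = v + Δv) (hsplus : splus = s + Δs)
    (βplus : Fin n ⊕ Fin n → ℝ)
    (hβplus : βplus = fun i => Real.sqrt (vplus i * splus i)) :
    Real.sqrt (∑ i, (τplus - βplus i) ^ 2) / τplus ≤
      ξ ^ 2 / (1 + Real.sqrt (1 - ξ ^ 2)) + η * Real.sqrt (2 * n) / (1 - η) :=
  proximity_after_newton_step_general Htil hH lam hlam Ω v s hv hs β hβ τ hτ Δz Δv Δs heq1 heq2 heq3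
    ξ hξdef hξ η hη0 hη1 τplus hτplus vplus splus hvplus hsplus βplus hβplus
end

section
/- Let n ≥ 1 be an integer and set η = (√2 − 1)/(√(2n) + √2 − 1). Then for every real ξ with 0 ≤ ξ ≤ 1/√2, the inequality ξ²/(1 + √(1 − ξ²)) + η√(2n)/(1 − η) ≤ 1/√2 holds. Consequently, the proximity bound ξ ≤ 1/√2 is preserved from one interior-point iteration to the next under the update τ₊ = (1 − η)τ. -/
/-! The step-size term is exactly `√2 - 1`, since `η / (1 - η) = (√2 - 1) / √(2n)`.
Rationalizing, `ξ² / (1 + √(1 - ξ²)) = 1 - √(1 - ξ²)`, and `ξ² ≤ 1/2` gives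
`√(1 - ξ²) ≥ 1/√2`; the sum is therefore at most `√2 - 1/√2 = 1/√2`. -/

open Real

lemma mul_div_one_sub_of_eq_div_add {a m η : ℝ} (hm : 0 < m) (ha : 0 ≤ a)
    (hη : η = a / (m + a)) : η * m / (1 - η) = a := by
  have hma : m + a ≠ 0 := by positivity
  have h1η : 1 - η = m / (m + a) := by
    rw [hη]; field_simp; ring
  rw [h1η, hη]
  field_simp

lemma sq_div_one_add_sqrt_one_sub_sq {ξ : ℝ} (hξ : ξ ^ 2 ≤ 1) :
    ξ ^ 2 / (1 + √(1 - ξ ^ 2)) = 1 - √(1 - ξ ^ 2) := by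
  have hs : √(1 - ξ ^ 2) ^ 2 = 1 - ξ ^ 2 := sq_sqrt (by linarith)
  rw [div_eq_iff (by positivity)]
  linear_combination hs

lemma sq_le_one_half_of_le_one_div_sqrt_two {ξ : ℝ} (hξ0 : 0 ≤ ξ) (hξ : ξ ≤ 1 / √2) :
    ξ ^ 2 ≤ 1 / 2 :=
  calc ξ ^ 2 ≤ (1 / √2) ^ 2 := pow_le_pow_left₀ hξ0 hξ 2
    _ = 1 / 2 := by rw [div_pow, one_pow, sq_sqrt zero_le_two]

lemma one_div_sqrt_two_le_sqrt_one_sub_sq {ξ : ℝ} (hξ : ξ ^ 2 ≤ 1 / 2) :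
    1 / √2 ≤ √(1 - ξ ^ 2) :=
  calc 1 / √2 = √(1 / 2) := by rw [sqrt_div' _ zero_le_two, sqrt_one]
    _ ≤ √(1 - ξ ^ 2) := sqrt_le_sqrt (by linarith)

lemma sqrt_two_sub_one_div_sqrt_two : √2 - 1 / √2 = 1 / √2 := by
  have h : √2 * √2 = 2 := mul_self_sqrt zero_le_two
  field_simp
  linarith

/-- invariance of the proximity bound `ξ ≤ 1/√2`. With
`η = (√2 − 1)/(√(2n) + √2 − 1)`, for every `0 ≤ ξ ≤ 1/√2`,
`ξ²/(1 + √(1 − ξ²)) + η√(2n)/(1 − η) ≤ 1/√2`. -/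
theorem proximity_bound_invariant (n : ℕ) (hn : 1 ≤ n)
    (η : ℝ) (hη : η = (Real.sqrt 2 - 1) / (Real.sqrt (2 * n) + Real.sqrt 2 - 1)) :
    ∀ ξ : ℝ, 0 ≤ ξ → ξ ≤ 1 / Real.sqrt 2 →
      ξ ^ 2 / (1 + Real.sqrt (1 - ξ ^ 2)) + η * Real.sqrt (2 * n) / (1 - η) ≤
        1 / Real.sqrt 2 := by
  intro ξ hξ0 hξ
  have h2n : 0 < √(2 * n) := sqrt_pos.2 (mul_pos two_pos (Nat.cast_pos.2 hn))
  have hstep : η * √(2 * n) / (1 - η) = √2 - 1 :=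
    mul_div_one_sub_of_eq_div_add h2n (by linarith [one_lt_sqrt_two])
      (by rw [hη, add_sub_assoc])
  have hξ2 := sq_le_one_half_of_le_one_div_sqrt_two hξ0 hξ
  rw [hstep, sq_div_one_add_sqrt_one_sub_sq (by linarith)]
  linarith [one_div_sqrt_two_le_sqrt_one_sub_sq hξ2, sqrt_two_sub_one_div_sqrt_two]
end

section
/- Let n ≥ 1 be an integer, λ = 1/√(n+1), and let h̃ ∈ ℝ^n satisfy ‖h̃‖_∞ ≤ 1. Define the initial point v⁰ = col(e − λh̃, e + λh̃) ∈ ℝ^{2n}, s⁰ = e ∈ ℝ^{2n}, and β⁰ = √(v⁰ s⁰). Then the initial proximity satisfies ξ(β⁰, 1) = ‖e − β⁰‖ ≤ 1/√2; equivalently, Σ_{i=1}^n [(1 − √(1 − λh̃_i))² + (1 − √(1 + λh̃_i))²] ≤ 1/2. -/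
/-!
Write `a = √(1 - t)`, `b = √(1 + t)`, `p = a + b` and `q = ab = √(1 - t²)`. Then `p² = 2 + 2q`, and
the deviation `(1 - a)² + (1 - b)² = 4 - 2p` satisfies `(4 - 2p)(1 + q)(2 + p) = 4t²`. Since
`p ≥ 1 + q`, the factor `(1 + q)(2 + p) ≥ (1 + q)(3 + q) ≥ 8q ≥ 8q²`, so the deviation is at most
`t² / (2(1 - t²))`. With `t = λh̃ᵢ` we have `(n + 1)t² ≤ 1`, which makes each of the `n` summands at
most `1 / (2n)`.
-/

open Finset

theorem mul_sq_one_sub_sqrt_pair_le_half {t c : ℝ} (hc : 0 ≤ c)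
    (ht : (c + 1) * t ^ 2 ≤ 1) :
    c * ((1 - √(1 - t)) ^ 2 + (1 - √(1 + t)) ^ 2) ≤ 1 / 2 := by
  have ht1 : t ^ 2 ≤ 1 := by nlinarith [sq_nonneg t]
  have ha : √(1 - t) ^ 2 = 1 - t := Real.sq_sqrt (by nlinarith)
  have hb : √(1 + t) ^ 2 = 1 + t := Real.sq_sqrt (by nlinarith)
  set p := √(1 - t) + √(1 + t) with hp
  set q := √(1 - t) * √(1 + t) with hq
  have hq0 : 0 ≤ q := by positivity
  have hp0 : 0 ≤ p := by positivity
  have hqq : q ^ 2 = 1 - t ^ 2 := by rw [hq, mul_pow, ha, hb]; ring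
  have hpp : p ^ 2 = 2 + 2 * q := by rw [hp, add_sq, ha, hb, hq]; ring
  have hq1 : q ≤ 1 := by nlinarith
  have hpq : 1 + q ≤ p := abs_le_of_sq_le_sq' (by nlinarith) hp0 |>.2
  have hdev : (1 - √(1 - t)) ^ 2 + (1 - √(1 + t)) ^ 2 = 4 - 2 * p := by
    rw [hp]; linear_combination ha + hb
  have hidentity : (4 - 2 * p) * ((1 + q) * (2 + p)) = 4 * t ^ 2 := by
    linear_combination (-2 - 2 * q) * hpp - 4 * hqq
  have hfactor : 8 * q ^ 2 ≤ (1 + q) * (2 + p) := by nlinarith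
  have hpos : 0 < (1 + q) * (2 + p) := by positivity
  rw [hdev]
  refine le_of_mul_le_mul_right ?_ hpos
  nlinarith

theorem sum_le_of_forall_card_mul_le {ι K : Type*} [Fintype ι] [Field K] [LinearOrder K]
    [IsStrictOrderedRing K] {a : ι → K} {c : K} (hc : 0 ≤ c)
    (h : ∀ i, Fintype.card ι * a i ≤ c) : ∑ i, a i ≤ c := by
  rcases isEmpty_or_nonempty ι with hι | hι
  · simpa using hc
  have hcard : (0 : K) < Fintype.card ι := by exact_mod_cast Fintype.card_pos
  refine le_of_mul_le_mul_left ?_ hcard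
  calc (Fintype.card ι : K) * ∑ i, a i = ∑ i, Fintype.card ι * a i := mul_sum _ _ _
    _ ≤ ∑ _i : ι, c := sum_le_sum fun i _ => h i
    _ = Fintype.card ι * c := by simp

theorem initial_proximity_general {n : ℕ}
    (lam : ℝ) (hlam : lam = 1 / Real.sqrt (n + 1))
    (htil : Fin n → ℝ) (hbound : ∀ i, |htil i| ≤ 1)
    (v0 : Fin n ⊕ Fin n → ℝ)
    (hv0 : v0 = Sum.elim (fun i => 1 - lam * htil i) (fun i => 1 + lam * htil i))
    (s0 : Fin n ⊕ Fin n → ℝ) (hs0 : s0 = fun _ => 1)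
    (β0 : Fin n ⊕ Fin n → ℝ) (hβ0 : β0 = fun i => Real.sqrt (v0 i * s0 i)) :
    Real.sqrt (∑ i, (1 - β0 i) ^ 2) / 1 ≤ 1 / Real.sqrt 2 ∧
      ∑ i, ((1 - Real.sqrt (1 - lam * htil i)) ^ 2
        + (1 - Real.sqrt (1 + lam * htil i)) ^ 2) ≤ 1 / 2 := by
  have hlam_sq : ((n : ℝ) + 1) * lam ^ 2 = 1 := by
    rw [hlam, div_pow, Real.sq_sqrt (by positivity)]
    field_simp
  have hsum : ∑ i, ((1 - Real.sqrt (1 - lam * htil i)) ^ 2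
      + (1 - Real.sqrt (1 + lam * htil i)) ^ 2) ≤ 1 / 2 := by
    refine sum_le_of_forall_card_mul_le (by norm_num) fun i => ?_
    rw [Fintype.card_fin]
    refine mul_sq_one_sub_sqrt_pair_le_half n.cast_nonneg ?_
    calc ((n : ℝ) + 1) * (lam * htil i) ^ 2 = ((n + 1) * lam ^ 2) * htil i ^ 2 := by ring
      _ ≤ 1 := by rw [hlam_sq, one_mul]; exact sq_le_one_iff_abs_le_one _ |>.mpr (hbound i)
  refine ⟨?_, hsum⟩
  subst hβ0 hs0 hv0
  rw [div_one, one_div, ← Real.sqrt_inv, ← one_div]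
  refine Real.sqrt_le_sqrt ?_
  simpa [Fintype.sum_sum_type, sum_add_distrib] using hsum

/-- the initial proximity measure. With `λ = 1/√(n+1)`, `‖h̃‖_∞ ≤ 1`,
`v⁰ = col(e − λh̃, e + λh̃)`, `s⁰ = e`, `β⁰ = √(v⁰s⁰)`, the initial proximity satisfies
`ξ(β⁰, 1) = ‖e − β⁰‖ ≤ 1/√2` (Euclidean norm); equivalently
`Σᵢ [(1 − √(1 − λh̃ᵢ))² + (1 − √(1 + λh̃ᵢ))²] ≤ 1/2`. -/
theorem initial_proximity {n : ℕ} (hn : 1 ≤ n)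
    (lam : ℝ) (hlam : lam = 1 / Real.sqrt (n + 1))
    (htil : Fin n → ℝ) (hbound : ∀ i, |htil i| ≤ 1)
    (v0 : Fin n ⊕ Fin n → ℝ)
    (hv0 : v0 = Sum.elim (fun i => 1 - lam * htil i) (fun i => 1 + lam * htil i))
    (s0 : Fin n ⊕ Fin n → ℝ) (hs0 : s0 = fun _ => 1)
    (β0 : Fin n ⊕ Fin n → ℝ) (hβ0 : β0 = fun i => Real.sqrt (v0 i * s0 i)) :
    Real.sqrt (∑ i, (1 - β0 i) ^ 2) / 1 ≤ 1 / Real.sqrt 2 ∧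
      ∑ i, ((1 - Real.sqrt (1 - lam * htil i)) ^ 2
        + (1 - Real.sqrt (1 + lam * htil i)) ^ 2) ≤ 1 / 2 :=
  initial_proximity_general lam hlam htil hbound v0 hv0 s0 hs0 β0 hβ0
end

section
/- Let H̃ ∈ ℝ^{n×n} be symmetric, λ > 0, τ ∈ ℝ, and let γ, θ, φ, ψ ∈ ℝ^n have all components strictly positive. Suppose Δz ∈ ℝ^n solves the compact system (2λH̃ + diag(γ/φ) + diag(θ/ψ))Δz = 2(√(θ/ψ)τe − √(γ/φ)τe + γ − θ), and define Δγ = (γ/φ)Δz + 2(√(γ/φ)τe − γ), Δθ = −(θ/ψ)Δz + 2(√(θ/ψ)τe − θ), Δφ = −Δz, Δψ = Δz. Then with v = col(γ,θ), s = col(φ,ψ), Δv = col(Δγ,Δθ), Δs = col(Δφ,Δψ), and Ω = [I,−I], the full Newton system holds: 2λH̃Δz + ΩΔv = 0, ΩᵀΔz + Δs = 0, and √(s/v)Δv + √(v/s)Δs = 2(τe − √(vs)). -/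
/-!
With `Ω = [I, -I]` we have `ΩΔv = Δγ - Δθ`, and substituting the back-substitution formulas turns
the first Newton equation into the compact system; the second holds since `Δs = col(-Δz, Δz)`. The complementarity
equation holds componentwise: writing `r = √(v / s)`, the back-substitution reads
`Δv = -r² Δs + 2 (r τ - v)`, and `v = r √(v s)`.
-/

open Matrix

lemma fromCols_one_neg_one_mulVec_sumElim {m R : Type*} [Fintype m] [DecidableEq m] [Ring R]
    (x y : m → R) :
    fromCols (1 : Matrix m m R) (-1) *ᵥ Sum.elim x y = x - y := by
  rw [fromCols_mulVec_sumElim, one_mulVec, neg_mulVec, one_mulVec, sub_eq_add_neg]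

lemma transpose_fromCols_one_neg_one_mulVec {m R : Type*} [Fintype m] [DecidableEq m] [Ring R]
    (z : m → R) :
    (fromCols (1 : Matrix m m R) (-1))ᵀ *ᵥ z = Sum.elim z (-z) := by
  rw [transpose_fromCols, fromRows_mulVec, transpose_neg, transpose_one, neg_mulVec, one_mulVec]

lemma sqrt_div_mul_add_sqrt_div_mul_of_eq {v s τ Δv Δs : ℝ} (hv : 0 < v) (hs : 0 < s)
    (hΔv : Δv = -(v / s) * Δs + 2 * (√(v / s) * τ - v)) :
    √(s / v) * Δv + √(v / s) * Δs = 2 * (τ - √(v * s)) := by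
  set r := √(v / s) with hr
  have hr_pos : 0 < r := Real.sqrt_pos.2 (div_pos hv hs)
  have hr_sq : r ^ 2 = v / s := Real.sq_sqrt (div_pos hv hs).le
  have hr_inv : √(s / v) = r⁻¹ := by rw [hr, ← Real.sqrt_inv, inv_div]
  have hv_eq : v = r * √(v * s) := by
    rw [hr, ← Real.sqrt_mul (div_pos hv hs).le, show v / s * (v * s) = v * v by field_simp,
      Real.sqrt_mul_self hv.le]
  rw [hr_inv, hΔv, ← hr_sq]
  field_simp
  linear_combination (-2) * hv_eq

theorem compact_system_recovers_full_newton_general {n : ℕ}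
    (Htil : Matrix (Fin n) (Fin n) ℝ)
    (lam : ℝ) (τ : ℝ)
    (γ θ φv ψv : Fin n → ℝ)
    (hγ : ∀ i, 0 < γ i) (hθ : ∀ i, 0 < θ i)
    (hφ : ∀ i, 0 < φv i) (hψ : ∀ i, 0 < ψv i)
    (Δz : Fin n → ℝ)
    (hΔz : ((2 * lam) • Htil + Matrix.diagonal (fun i => γ i / φv i)
        + Matrix.diagonal (fun i => θ i / ψv i)).mulVec Δz =
      fun i => 2 * (Real.sqrt (θ i / ψv i) * τ - Real.sqrt (γ i / φv i) * τ
        + γ i - θ i))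
    (Δγ Δθ Δφ Δψ : Fin n → ℝ)
    (hΔγ : Δγ = fun i => (γ i / φv i) * Δz i + 2 * (Real.sqrt (γ i / φv i) * τ - γ i))
    (hΔθ : Δθ = fun i => -(θ i / ψv i) * Δz i + 2 * (Real.sqrt (θ i / ψv i) * τ - θ i))
    (hΔφ : Δφ = -Δz) (hΔψ : Δψ = Δz)
    (v s Δv Δs : Fin n ⊕ Fin n → ℝ)
    (hv : v = Sum.elim γ θ) (hs : s = Sum.elim φv ψv)
    (hΔv : Δv = Sum.elim Δγ Δθ) (hΔs : Δs = Sum.elim Δφ Δψ)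
    (Ω : Matrix (Fin n) (Fin n ⊕ Fin n) ℝ)
    (hΩ : Ω = Matrix.fromCols (1 : Matrix (Fin n) (Fin n) ℝ)
      (-(1 : Matrix (Fin n) (Fin n) ℝ))) :
    (2 * lam) • Htil.mulVec Δz + Ω.mulVec Δv = 0 ∧
    Ωᵀ.mulVec Δz + Δs = 0 ∧
    (∀ i, Real.sqrt (s i / v i) * Δv i + Real.sqrt (v i / s i) * Δs i
        = 2 * (τ - Real.sqrt (v i * s i))) := by
  subst hv hs hΔv hΔs hΩ hΔφ hΔψ
  refine ⟨?_, ?_, ?_⟩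
  · rw [fromCols_one_neg_one_mulVec_sumElim, hΔγ, hΔθ]
    funext i
    have hrow := congrFun hΔz i
    simp only [add_mulVec, smul_mulVec, mulVec_diagonal, Pi.add_apply, Pi.smul_apply,
      smul_eq_mul] at hrow
    simp only [Pi.add_apply, Pi.sub_apply, Pi.smul_apply, smul_eq_mul, Pi.zero_apply]
    linarith
  · rw [transpose_fromCols_one_neg_one_mulVec]
    funext i
    cases i <;> simp
  · rintro (i | i)
    · exact sqrt_div_mul_add_sqrt_div_mul_of_eq (hγ i) (hφ i) (by simp [hΔγ])
    · exact sqrt_div_mul_add_sqrt_div_mul_of_eq (hθ i) (hψ i) (by simp [hΔθ])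

/-- the reduced (compact) Newton system together with the back-substitution
formulas for `Δγ, Δθ, Δφ, Δψ` recovers the full Newton system. -/
theorem compact_system_recovers_full_newton {n : ℕ}
    (Htil : Matrix (Fin n) (Fin n) ℝ) (hHtil : Htil.IsSymm)
    (lam : ℝ) (hlam : 0 < lam) (τ : ℝ)
    (γ θ φv ψv : Fin n → ℝ)
    (hγ : ∀ i, 0 < γ i) (hθ : ∀ i, 0 < θ i)
    (hφ : ∀ i, 0 < φv i) (hψ : ∀ i, 0 < ψv i)
    (Δz : Fin n → ℝ)
    (hΔz : ((2 * lam) • Htil + Matrix.diagonal (fun i => γ i / φv i)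
        + Matrix.diagonal (fun i => θ i / ψv i)).mulVec Δz =
      fun i => 2 * (Real.sqrt (θ i / ψv i) * τ - Real.sqrt (γ i / φv i) * τ
        + γ i - θ i))
    (Δγ Δθ Δφ Δψ : Fin n → ℝ)
    (hΔγ : Δγ = fun i => (γ i / φv i) * Δz i + 2 * (Real.sqrt (γ i / φv i) * τ - γ i))
    (hΔθ : Δθ = fun i => -(θ i / ψv i) * Δz i + 2 * (Real.sqrt (θ i / ψv i) * τ - θ i))
    (hΔφ : Δφ = -Δz) (hΔψ : Δψ = Δz)
    (v s Δv Δs : Fin n ⊕ Fin n → ℝ)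
    (hv : v = Sum.elim γ θ) (hs : s = Sum.elim φv ψv)
    (hΔv : Δv = Sum.elim Δγ Δθ) (hΔs : Δs = Sum.elim Δφ Δψ)
    (Ω : Matrix (Fin n) (Fin n ⊕ Fin n) ℝ)
    (hΩ : Ω = Matrix.fromCols (1 : Matrix (Fin n) (Fin n) ℝ)
      (-(1 : Matrix (Fin n) (Fin n) ℝ))) :
    (2 * lam) • Htil.mulVec Δz + Ω.mulVec Δv = 0 ∧
    Ωᵀ.mulVec Δz + Δs = 0 ∧
    (∀ i, Real.sqrt (s i / v i) * Δv i + Real.sqrt (v i / s i) * Δs i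
        = 2 * (τ - Real.sqrt (v i * s i))) :=
  compact_system_recovers_full_newton_general Htil lam τ γ θ φv ψv hγ hθ hφ hψ Δz hΔz Δγ Δθ Δφ Δψ
    hΔγ hΔθ hΔφ hΔψ v s Δv Δs hv hs hΔv hΔs Ω hΩ
end
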